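/- Let {x_n} be a sequence of nonzero vectors in H with ‖x_n‖ → 0 as n → ∞. Suppose there exists an infinite-dimensional closed subspace M of H such that {P_M x_n} satisfies a lower frame condition for M (∑_n |⟨x, P_M x_n⟩|² ≥ A‖x‖² for all x ∈ M, some A > 0). Then {x_n/‖x_n‖} is not a Bessel sequence in H. -/

import Mathlib

open scoped ComplexInnerProductSpace ENNReal
open Filter Topology

noncomputable section

variable {E : Type*} [NormedAddCommGroup E] [InnerProductSpace ℂ E]

/-- `y` is a Bessel sequence with Bessel bound `B`:
`∑ᵢ |⟪z, yᵢ⟫|² ≤ B‖z‖²` for all `z` (sum taken in `ℝ≥0∞` so that divergence is handled). -/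
def BesselWith {ι : Type*} (y : ι → E) (B : ℝ) : Prop :=
  ∀ z : E, ∑' i, ENNReal.ofReal (‖⟪z, y i⟫‖ ^ 2) ≤ ENNReal.ofReal (B * ‖z‖ ^ 2)

/-- `y` satisfies the lower frame condition with bound `A`:
`A‖z‖² ≤ ∑ᵢ |⟪z, yᵢ⟫|²` for all `z`. -/
def LowerFrameWith {ι : Type*} (y : ι → E) (A : ℝ) : Prop :=
  ∀ z : E, ENNReal.ofReal (A * ‖z‖ ^ 2) ≤ ∑' i, ENNReal.ofReal (‖⟪z, y i⟫‖ ^ 2)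

/-- `y` is a frame with frame bounds `A ≤ B`. -/
def FrameWith {ι : Type*} (y : ι → E) (A B : ℝ) : Prop :=
  0 < A ∧ A ≤ B ∧ LowerFrameWith y A ∧ BesselWith y B

/-- The normalized sequence `yᵢ/‖yᵢ‖`. -/
def normalizeSeq {ι : Type*} (y : ι → E) : ι → E := fun i => (‖y i‖ : ℂ)⁻¹ • y i

/-! A Bessel bound `B` for the normalized sequence gives, for every `c > 0`, a nonzero `w ∈ M`
orthogonal to the finitely many projections `P_M x_n` with `‖x_n‖² > c`; for it the lower frame
inequality reads `A‖w‖² ≤ ∑ ‖x_n‖² |⟪w, x_n/‖x_n‖⟫|² ≤ c B ‖w‖²`. Letting `c → 0` forces `A ≤ 0`. -/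

theorem norm_inner_eq_norm_mul_norm_inner_normalizeSeq {ι : Type*} (y : ι → E) (z : E) (i : ι) :
    ‖⟪z, y i⟫‖ = ‖y i‖ * ‖⟪z, normalizeSeq y i⟫‖ := by
  rcases eq_or_ne (y i) 0 with hy | hy
  · simp [hy]
  · rw [normalizeSeq, inner_smul_right, norm_mul, norm_inv, Complex.norm_real, norm_norm,
      ← mul_assoc, mul_inv_cancel₀ (norm_ne_zero_iff.mpr hy), one_mul]

theorem BesselWith.tsum_le_of_inner_eq_zero_or_norm_sq_le {ι : Type*} {y : ι → E} {B c : ℝ}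
    (hB : BesselWith (normalizeSeq y) B) (hc : 0 ≤ c) {z : E}
    (hz : ∀ i, ⟪z, y i⟫ = 0 ∨ ‖y i‖ ^ 2 ≤ c) :
    ∑' i, ENNReal.ofReal (‖⟪z, y i⟫‖ ^ 2) ≤ ENNReal.ofReal (c * B * ‖z‖ ^ 2) := by
  have hterm : ∀ i, ENNReal.ofReal (‖⟪z, y i⟫‖ ^ 2) ≤
      ENNReal.ofReal c * ENNReal.ofReal (‖⟪z, normalizeSeq y i⟫‖ ^ 2) := fun i => by
    rcases hz i with h | h
    · simp [h]
    · rw [← ENNReal.ofReal_mul hc, norm_inner_eq_norm_mul_norm_inner_normalizeSeq y z i, mul_pow]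
      gcongr
  calc ∑' i, ENNReal.ofReal (‖⟪z, y i⟫‖ ^ 2)
      ≤ ∑' i, ENNReal.ofReal c * ENNReal.ofReal (‖⟪z, normalizeSeq y i⟫‖ ^ 2) :=
        ENNReal.tsum_le_tsum hterm
    _ = ENNReal.ofReal c * ∑' i, ENNReal.ofReal (‖⟪z, normalizeSeq y i⟫‖ ^ 2) :=
        ENNReal.tsum_mul_left
    _ ≤ ENNReal.ofReal c * ENNReal.ofReal (B * ‖z‖ ^ 2) := by gcongr; exact hB z
    _ = ENNReal.ofReal (c * B * ‖z‖ ^ 2) := by rw [← ENNReal.ofReal_mul hc, mul_assoc]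

theorem exists_ne_zero_forall_inner_eq_zero {𝕜 F : Type*} [RCLike 𝕜] [NormedAddCommGroup F]
    [InnerProductSpace 𝕜 F] (hF : ¬ FiniteDimensional 𝕜 F) {s : Set F} (hs : s.Finite) :
    ∃ w : F, w ≠ 0 ∧ ∀ v ∈ s, inner 𝕜 v w = 0 := by
  have : FiniteDimensional 𝕜 (Submodule.span 𝕜 s) := FiniteDimensional.span_of_finite 𝕜 hs
  have hspan : (Submodule.span 𝕜 s)ᗮ ≠ ⊥ := by
    rw [Ne, Submodule.orthogonal_eq_bot_iff]
    rintro htop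
    rw [htop] at this
    exact hF (Module.Finite.equiv Submodule.topEquiv)
  obtain ⟨w, hw, hw0⟩ := (Submodule.ne_bot_iff _).mp hspan
  exact ⟨w, hw0, fun v hv => Submodule.inner_right_of_mem_orthogonal (Submodule.subset_span hv) hw⟩

theorem LowerFrameWith.le_mul_of_besselWith_normalizeSeq {H : Type*} [NormedAddCommGroup H]
    [InnerProductSpace ℂ H] {x : ℕ → H} (h0 : Tendsto (fun n => ‖x n‖) atTop (𝓝 0))
    {M : Submodule ℂ H} [CompleteSpace M] (hM : ¬ FiniteDimensional ℂ M) {A B : ℝ} (hA0 : 0 < A)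
    (hA : LowerFrameWith (fun n => (M.orthogonalProjectionOnto (x n) : M)) A)
    (hB : BesselWith (normalizeSeq x) B) {c : ℝ} (hc : 0 < c) : A ≤ c * B := by
  set P : ℕ → M := fun n => M.orthogonalProjectionOnto (x n)
  obtain ⟨N, hN⟩ := eventually_atTop.mp <|
    (by simpa using h0.pow 2 : Tendsto (fun n => ‖x n‖ ^ 2) atTop (𝓝 0)).eventually (ge_mem_nhds hc)
  obtain ⟨w, hw0, hw⟩ := exists_ne_zero_forall_inner_eq_zero hM ((Set.finite_Iio N).image P)
  have hinner : ∀ n, ⟪(w : H), x n⟫ = ⟪w, P n⟫ := fun n =>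
    (M.inner_orthogonalProjectionOnto_eq_of_mem_left w (x n)).symm
  have hsplit : ∀ n, ⟪(w : H), x n⟫ = 0 ∨ ‖x n‖ ^ 2 ≤ c := fun n => by
    rcases lt_or_ge n N with hn | hn
    · exact .inl <| (hinner n).trans <| inner_eq_zero_symm.mp (hw _ ⟨n, hn, rfl⟩)
    · exact .inr (hN n hn)
  have hbound : ENNReal.ofReal (A * ‖w‖ ^ 2) ≤ ENNReal.ofReal (c * B * ‖w‖ ^ 2) :=
    calc _ ≤ ∑' n, ENNReal.ofReal (‖⟪w, P n⟫‖ ^ 2) := hA w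
      _ = ∑' n, ENNReal.ofReal (‖⟪(w : H), x n⟫‖ ^ 2) := by simp only [hinner]
      _ ≤ _ := hB.tsum_le_of_inner_eq_zero_or_norm_sq_le hc.le hsplit
  have hw : 0 < ‖w‖ ^ 2 := by positivity
  rcases ENNReal.ofReal_le_ofReal_iff'.mp hbound with h | h
  · exact le_of_mul_le_mul_right h hw
  · exact absurd h (mul_pos hA0 hw).not_ge

theorem stmt9_general {H : Type*} [NormedAddCommGroup H] [InnerProductSpace ℂ H]
    (x : ℕ → H)
    (h0 : Tendsto (fun n => ‖x n‖) atTop (𝓝 0))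
    (M : Submodule ℂ H) [CompleteSpace M] (hM : ¬ FiniteDimensional ℂ M)
    (hA : ∃ A > (0 : ℝ),
      LowerFrameWith (fun n => (M.orthogonalProjectionOnto (x n) : M)) A) :
    ¬ ∃ B : ℝ, BesselWith (normalizeSeq x) B := by
  rintro ⟨B, hB⟩
  obtain ⟨A, hA0, hA⟩ := hA
  have hcB : Tendsto (fun c : ℝ => c * B) (𝓝[>] 0) (𝓝 0) := by
    simpa using (tendsto_id.mul_const B).mono_left (nhdsWithin_le_nhds (a := (0 : ℝ)))
  have hA_le : A ≤ 0 := ge_of_tendsto hcB <| eventually_nhdsWithin_of_forall fun c hc =>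
    hA.le_mul_of_besselWith_normalizeSeq h0 hM hA0 hB hc
  exact hA_le.not_gt hA0

/-- If `‖x_n‖ → 0` and the orthogonal projections of the `x_n` onto some
infinite-dimensional closed subspace `M` satisfy a lower frame condition for `M`, then the
normalized sequence is not a Bessel sequence in `H`. -/
theorem stmt9 {H : Type*} [NormedAddCommGroup H] [InnerProductSpace ℂ H] [CompleteSpace H]
    (x : ℕ → H) (hx : ∀ n, x n ≠ 0)
    (h0 : Tendsto (fun n => ‖x n‖) atTop (𝓝 0))
    (M : Submodule ℂ H) [CompleteSpace M] (hM : ¬ FiniteDimensional ℂ M)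
    (hA : ∃ A > (0 : ℝ),
      LowerFrameWith (fun n => (M.orthogonalProjectionOnto (x n) : M)) A) :
    ¬ ∃ B : ℝ, BesselWith (normalizeSeq x) B :=
  stmt9_general x h0 M hM hA
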